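/- Let f : ℝ → ℍ be a one-sided original with growth exponent s₀ and constant C. Then for every quaternion p with re p > s₀ the function t ↦ f(t)·exp(−t·p) is Bochner integrable on [0,∞), the Laplace image F(p) := ∫_0^∞ f(t)·exp(−t·p) dt satisfies ‖F(p)‖ ≤ C/(re p − s₀), and F is Fréchet differentiable over ℝ at every point of the open half-space {p ∈ ℍ : re p > s₀}. (Convergence and smoothness content of the paper's Theorem 3.4: the Laplace image of every original is defined and holomorphic on the half-space re p > s₀.) -/

import Mathlib

open MeasureTheory Set

/-- `f : ℝ → ℍ` is a one-sided original with growth exponent `s₀` and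
constant `C > 0`. -/
structure IsOneSidedOriginal (f : ℝ → Quaternion ℝ) (s₀ C : ℝ) : Prop where
  posC : 0 < C
  measurable : MeasureTheory.StronglyMeasurable f
  locInt : ∀ r : ℝ, 0 < r → IntegrableOn f (Icc (-r) r)
  zero_of_neg : ∀ t : ℝ, t < 0 → f t = 0
  growth : ∀ t : ℝ, 0 ≤ t → ‖f t‖ ≤ C * Real.exp (s₀ * t)

/-!
Since `‖exp q‖ = exp (re q)` for quaternions, the integrand is dominated by
`C exp ((s₀ - re p) t)`, which gives integrability and the bound `C / (re p - s₀)`.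
For differentiability we differentiate under the integral sign. The kernel is
Lipschitz in `q`: by Duhamel's formula `exp (t x) - exp (t y)` is the integral over
`s ∈ [0, t]` of `exp (s x) (x - y) exp ((t - s) y)`, whose norm is at most
`exp (-s₁ t) ‖x - y‖` when `re x, re y ≤ -s₁`. Near `p` this yields the integrable
Lipschitz constant `C t exp (-(s₁ - s₀) t)` for any `s₀ < s₁ < re p`.
-/

open NormedSpace
open scoped Quaternion

section NormedAlgebra

variable {𝔸 : Type*} [NormedRing 𝔸] [NormedAlgebra ℝ 𝔸] [CompleteSpace 𝔸]

theorem contDiff_exp_real {n : WithTop ℕ∞} : ContDiff ℝ n (exp : 𝔸 → 𝔸) :=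
  AnalyticOnNhd.contDiff fun x _ => exp_analytic x

theorem norm_exp_smul_sub_exp_smul_le (x y : 𝔸) {t M : ℝ} (ht : 0 ≤ t)
    (hM : ∀ s ∈ Icc 0 t, ‖exp (s • x)‖ * ‖exp ((t - s) • y)‖ ≤ M) :
    ‖exp (t • x) - exp (t • y)‖ ≤ M * ‖x - y‖ * t := by
  -- `s ↦ exp (s • x) * exp ((t - s) • y)` runs from `exp (t • y)` to `exp (t • x)`.
  have hderiv : ∀ s : ℝ, HasDerivAt (fun s => exp (s • x) * exp ((t - s) • y))
      (exp (s • x) * (x - y) * exp ((t - s) • y)) s := by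
    intro s
    have hy : HasDerivAt (fun s => exp ((t - s) • y)) (-(y * exp ((t - s) • y))) s := by
      have h := (hasDerivAt_exp_smul_const' (𝕂 := ℝ) y (t - s)).scomp s
        ((hasDerivAt_id s).const_sub t)
      rwa [neg_one_smul] at h
    convert (hasDerivAt_exp_smul_const (𝕂 := ℝ) x s).fun_mul hy using 1
    noncomm_ring
  have hbound : ∀ s ∈ Ico 0 t,
      ‖exp (s • x) * (x - y) * exp ((t - s) • y)‖ ≤ M * ‖x - y‖ := fun s hs =>
    calc _ ≤ ‖exp (s • x)‖ * ‖x - y‖ * ‖exp ((t - s) • y)‖ := norm_mul₃_le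
      _ = ‖exp (s • x)‖ * ‖exp ((t - s) • y)‖ * ‖x - y‖ := by ring
      _ ≤ M * ‖x - y‖ := by gcongr; exact hM s (Ico_subset_Icc_self hs)
  simpa using norm_image_sub_le_of_norm_deriv_le_segment'
    (fun s _ => (hderiv s).hasDerivWithinAt) hbound t ⟨ht, le_rfl⟩

end NormedAlgebra

theorem integrableOn_exp_mul_Ici {a : ℝ} (ha : a < 0) (c : ℝ) :
    IntegrableOn (fun t : ℝ => Real.exp (a * t)) (Ici c) :=
  (integrableOn_Ici_iff_integrableOn_Ioi).2 (integrableOn_exp_mul_Ioi ha c)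

theorem integrableOn_mul_exp_neg_mul_Ici {b : ℝ} (hb : 0 < b) :
    IntegrableOn (fun t : ℝ => t * Real.exp (-b * t)) (Ici 0) :=
  (integrableOn_Ici_iff_integrableOn_Ioi).2 <| by
    simpa using integrableOn_rpow_mul_exp_neg_mul_rpow (s := 1) (p := 1) (by norm_num) one_pos hb

namespace Quaternion

theorem abs_re_le_norm (q : ℍ[ℝ]) : |q.re| ≤ ‖q‖ := by
  refine abs_le.2 (abs_le_of_sq_le_sq' ?_ (norm_nonneg q))
  rw [sq, sq, ← normSq_eq_norm_mul_self, normSq_def']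
  nlinarith [sq_nonneg q.imI, sq_nonneg q.imJ, sq_nonneg q.imK]

theorem sub_le_re_of_mem_ball {p q : ℍ[ℝ]} {r : ℝ} (hq : q ∈ Metric.ball p r) :
    p.re - r ≤ q.re := by
  have h := (abs_le.1 (abs_re_le_norm (p - q))).2
  rw [Metric.mem_ball, dist_comm, dist_eq_norm] at hq
  rw [re_sub] at h
  linarith

theorem norm_exp_neg_smul (t : ℝ) (q : ℍ[ℝ]) : ‖exp (-(t • q))‖ = Real.exp (-(t * q.re)) := by
  rw [norm_exp, ← Real.exp_eq_exp_ℝ, Real.norm_of_nonneg (Real.exp_pos _).le]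
  simp

theorem norm_exp_neg_smul_sub_exp_neg_smul_le {s₁ t : ℝ} (ht : 0 ≤ t) {q₁ q₂ : ℍ[ℝ]}
    (h₁ : s₁ ≤ q₁.re) (h₂ : s₁ ≤ q₂.re) :
    ‖exp (-(t • q₁)) - exp (-(t • q₂))‖ ≤ Real.exp (-(s₁ * t)) * ‖q₁ - q₂‖ * t := by
  have h := norm_exp_smul_sub_exp_smul_le (-q₁) (-q₂) ht (M := Real.exp (-(s₁ * t)))
    fun s hs => by
      rw [smul_neg, smul_neg, norm_exp_neg_smul, norm_exp_neg_smul, ← Real.exp_add]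
      gcongr
      nlinarith [hs.1, hs.2]
  rwa [smul_neg, smul_neg, neg_sub_neg, norm_sub_rev q₂] at h

theorem contDiff_exp_neg_smul {n : WithTop ℕ∞} :
    ContDiff ℝ n fun tq : ℝ × ℍ[ℝ] => exp (-(tq.1 • tq.2)) :=
  contDiff_exp_real.comp (by fun_prop)

theorem continuous_fderiv_exp_neg_smul (p : ℍ[ℝ]) :
    Continuous fun t : ℝ => fderiv ℝ (fun q : ℍ[ℝ] => exp (-(t • q))) p :=
  ((contDiff_exp_neg_smul (n := 1)).fderiv (f := fun (t : ℝ) (q : ℍ[ℝ]) => exp (-(t • q)))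
    (n := 0) contDiff_const (by norm_num)).continuous

theorem hasFDerivAt_mul_exp_neg_smul (a : ℍ[ℝ]) (t : ℝ) (p : ℍ[ℝ]) :
    HasFDerivAt (fun q => a * exp (-(t • q)))
      ((ContinuousLinearMap.mul ℝ ℍ[ℝ] a).comp (fderiv ℝ (fun q : ℍ[ℝ] => exp (-(t • q))) p))
      p :=
  (ContinuousLinearMap.mul ℝ ℍ[ℝ] a).hasFDerivAt.comp p
    ((contDiff_exp_neg_smul (n := 1)).comp (contDiff_const.prodMk contDiff_id)
      |>.differentiable one_ne_zero p).hasFDerivAt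

end Quaternion

noncomputable def quaternionLaplace (f : ℝ → ℍ[ℝ]) (q : ℍ[ℝ]) : ℍ[ℝ] :=
  ∫ t in Ici (0 : ℝ), f t * exp (-(t • q))

namespace IsOneSidedOriginal

variable {f : ℝ → ℍ[ℝ]} {s₀ C : ℝ}

theorem aestronglyMeasurable_mul_exp_neg_smul (hf : IsOneSidedOriginal f s₀ C) (q : ℍ[ℝ])
    (μ : Measure ℝ) : AEStronglyMeasurable (fun t => f t * exp (-(t • q))) μ :=
  (hf.measurable.mul ((Quaternion.contDiff_exp_neg_smul (n := 0)).continuous.comp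
    (Continuous.prodMk_left q)).stronglyMeasurable).aestronglyMeasurable

theorem norm_mul_exp_neg_smul_le (hf : IsOneSidedOriginal f s₀ C) (q : ℍ[ℝ]) {t : ℝ}
    (ht : 0 ≤ t) : ‖f t * exp (-(t • q))‖ ≤ C * Real.exp ((s₀ - q.re) * t) :=
  calc _ ≤ ‖f t‖ * ‖exp (-(t • q))‖ := norm_mul_le _ _
    _ ≤ C * Real.exp (s₀ * t) * Real.exp (-(t * q.re)) := by
      rw [Quaternion.norm_exp_neg_smul]; gcongr; exact hf.growth t ht
    _ = C * Real.exp ((s₀ - q.re) * t) := by rw [mul_assoc, ← Real.exp_add]; ring_nf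

theorem norm_mul_exp_neg_smul_sub_le (hf : IsOneSidedOriginal f s₀ C) {s₁ t : ℝ} (ht : 0 ≤ t)
    {q₁ q₂ : ℍ[ℝ]} (h₁ : s₁ ≤ q₁.re) (h₂ : s₁ ≤ q₂.re) :
    ‖f t * exp (-(t • q₁)) - f t * exp (-(t • q₂))‖
      ≤ C * (t * Real.exp (-(s₁ - s₀) * t)) * ‖q₁ - q₂‖ :=
  calc _ ≤ ‖f t‖ * ‖exp (-(t • q₁)) - exp (-(t • q₂))‖ := by
        rw [← mul_sub]; exact norm_mul_le _ _
    _ ≤ C * Real.exp (s₀ * t) * (Real.exp (-(s₁ * t)) * ‖q₁ - q₂‖ * t) :=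
      mul_le_mul (hf.growth t ht) (Quaternion.norm_exp_neg_smul_sub_exp_neg_smul_le ht h₁ h₂)
        (norm_nonneg _) (mul_pos hf.posC (Real.exp_pos _)).le
    _ = C * (t * Real.exp (-(s₁ - s₀) * t)) * ‖q₁ - q₂‖ := by
      rw [show -(s₁ - s₀) * t = s₀ * t + -(s₁ * t) by ring, Real.exp_add]; ring

theorem integrableOn_mul_exp_neg_smul (hf : IsOneSidedOriginal f s₀ C) {q : ℍ[ℝ]}
    (hq : s₀ < q.re) : IntegrableOn (fun t => f t * exp (-(t • q))) (Ici 0) :=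
  ((integrableOn_exp_mul_Ici (by linarith) 0).const_mul C).mono'
    (hf.aestronglyMeasurable_mul_exp_neg_smul q _)
    ((ae_restrict_iff' measurableSet_Ici).2 (ae_of_all _ fun _ ht =>
      hf.norm_mul_exp_neg_smul_le q ht))

theorem norm_quaternionLaplace_le (hf : IsOneSidedOriginal f s₀ C) {q : ℍ[ℝ]}
    (hq : s₀ < q.re) : ‖quaternionLaplace f q‖ ≤ C / (q.re - s₀) :=
  calc ‖quaternionLaplace f q‖ ≤ ∫ t in Ici 0, C * Real.exp ((s₀ - q.re) * t) :=
        norm_integral_le_of_norm_le ((integrableOn_exp_mul_Ici (by linarith) 0).const_mul C)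
          ((ae_restrict_iff' measurableSet_Ici).2 (ae_of_all _ fun _ ht =>
            hf.norm_mul_exp_neg_smul_le q ht))
    _ = C / (q.re - s₀) := by
      rw [integral_Ici_eq_integral_Ioi, integral_const_mul, integral_exp_mul_Ioi (by linarith),
        mul_zero, Real.exp_zero, neg_div, ← div_neg, neg_sub, mul_one_div]

theorem hasFDerivAt_quaternionLaplace (hf : IsOneSidedOriginal f s₀ C) {p : ℍ[ℝ]}
    (hp : s₀ < p.re) :
    HasFDerivAt (quaternionLaplace f)
      (∫ t in Ici 0, (ContinuousLinearMap.mul ℝ ℍ[ℝ] (f t)).comp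
        (fderiv ℝ (fun q : ℍ[ℝ] => exp (-(t • q))) p)) p := by
  obtain ⟨ε, hε, hgap⟩ : ∃ ε > 0, 0 < p.re - ε - s₀ :=
    ⟨(p.re - s₀) / 2, by linarith, by linarith⟩
  have hderiv_meas : StronglyMeasurable fun t => (ContinuousLinearMap.mul ℝ ℍ[ℝ] (f t)).comp
      (fderiv ℝ (fun q : ℍ[ℝ] => exp (-(t • q))) p) :=
    isBoundedBilinearMap_comp.continuous.comp_stronglyMeasurable
      (((ContinuousLinearMap.mul ℝ ℍ[ℝ]).continuous.comp_stronglyMeasurable hf.measurable).prodMk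
        (Quaternion.continuous_fderiv_exp_neg_smul p).stronglyMeasurable)
  have hlip : ∀ t ∈ Ici (0 : ℝ), ∀ q ∈ Metric.ball p ε,
      ‖f t * exp (-(t • q)) - f t * exp (-(t • p))‖
        ≤ C * (t * Real.exp (-(p.re - ε - s₀) * t)) * ‖q - p‖ := fun _ ht q hq =>
    hf.norm_mul_exp_neg_smul_sub_le ht (Quaternion.sub_le_re_of_mem_ball hq)
      (Quaternion.sub_le_re_of_mem_ball (Metric.mem_ball_self hε))
  exact (hasFDerivAt_integral_of_dominated_loc_of_lip' (Metric.ball_mem_nhds p hε)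
    (fun q _ => hf.aestronglyMeasurable_mul_exp_neg_smul q _)
    (hf.integrableOn_mul_exp_neg_smul hp) hderiv_meas.aestronglyMeasurable
    ((ae_restrict_iff' measurableSet_Ici).2 (ae_of_all _ hlip))
    ((integrableOn_mul_exp_neg_mul_Ici hgap).const_mul C)
    (ae_of_all _ fun t => Quaternion.hasFDerivAt_mul_exp_neg_smul (f t) t p)).2

end IsOneSidedOriginal

theorem laplace_image_defined_and_differentiable
    (f : ℝ → Quaternion ℝ) (s₀ C : ℝ) (hf : IsOneSidedOriginal f s₀ C) :
    (∀ p : Quaternion ℝ, s₀ < p.re →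
      IntegrableOn (fun t : ℝ => f t * NormedSpace.exp (-(t • p))) (Ici 0)) ∧
    (∀ p : Quaternion ℝ, s₀ < p.re →
      ‖∫ t in Ici (0 : ℝ), f t * NormedSpace.exp (-(t • p))‖ ≤ C / (p.re - s₀)) ∧
    (∀ p : Quaternion ℝ, s₀ < p.re →
      DifferentiableAt ℝ
        (fun q : Quaternion ℝ => ∫ t in Ici (0 : ℝ), f t * NormedSpace.exp (-(t • q)))
        p) :=
  ⟨fun _ hp => hf.integrableOn_mul_exp_neg_smul hp,
    fun _ hp => hf.norm_quaternionLaplace_le hp,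
    fun _ hp => (hf.hasFDerivAt_quaternionLaplace hp).differentiableAt⟩
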